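/- arXiv:cs/0010037 — 3 statements merged into one kernel-verified Lean document; each statement's English description precedes it below -/
import Mathlib

section
/- A classical proposition A is a two-valued tautology if and only if the empty meta theory fuzzy-entails ⟨A ≥ 0.5⟩, i.e., every fuzzy interpretation gives A truth value at least 0.5. -/
/-- Propositional formulas built from letters with ∧, ∨, ¬. -/
inductive PForm (α : Type) : Type
  | letter : α → PForm α
  | and : PForm α → PForm α → PForm α
  | or : PForm α → PForm α → PForm α
  | neg : PForm α → PForm α

/-- Fuzzy evaluation: min for ∧, max for ∨, 1−x for ¬. -/
def feval {α : Type} (I : α → ℝ) : PForm α → ℝ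
  | .letter p => I p
  | .and A B => min (feval I A) (feval I B)
  | .or A B => max (feval I A) (feval I B)
  | .neg A => 1 - feval I A

/-- A fuzzy interpretation maps letters into [0,1]. -/
def IsFuzzy {α : Type} (I : α → ℝ) : Prop := ∀ p, I p ∈ Set.Icc (0:ℝ) 1

/-- Two-valued interpretations are the {0,1}-valued fuzzy interpretations. -/
def IsTwoValued {α : Type} (I : α → ℝ) : Prop := ∀ p, I p = 0 ∨ I p = 1

lemma feval_twoValued {α : Type} {I : α → ℝ} (h : IsTwoValued I) (A : PForm α) :
    feval I A = 0 ∨ feval I A = 1 := by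
  induction A with
  | letter p => exact h p
  | and A B hA hB =>
      simp only [feval]
      rcases hA with h1 | h1 <;> rcases hB with h2 | h2 <;> rw [h1, h2] <;> norm_num
  | or A B hA hB =>
      simp only [feval]
      rcases hA with h1 | h1 <;> rcases hB with h2 | h2 <;> rw [h1, h2] <;> norm_num
  | neg A hA =>
      simp only [feval]
      rcases hA with h1 | h1 <;> rw [h1] <;> norm_num

lemma round_twoValued {α : Type} (I : α → ℝ) :
    IsTwoValued (fun p => if 1/2 ≤ I p then (1:ℝ) else 0) := by
  intro p
  dsimp only
  split_ifs with hp
  · right; rfl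
  · left; rfl

lemma round_lemma {α : Type} (I : α → ℝ) (A : PForm α) :
    (feval (fun p => if 1/2 ≤ I p then (1:ℝ) else 0) A = 1 → 1/2 ≤ feval I A) ∧
    (feval (fun p => if 1/2 ≤ I p then (1:ℝ) else 0) A = 0 → feval I A ≤ 1/2) := by
  set J : α → ℝ := fun p => if 1/2 ≤ I p then 1 else 0 with hJdef
  induction A with
  | letter p =>
      constructor <;> intro h
      · by_cases hp : 1/2 ≤ I p
        · simpa [feval] using hp
        · exfalso
          simp only [feval, hJdef] at h
          rw [if_neg hp] at h
          norm_num at h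
      · by_cases hp : 1/2 ≤ I p
        · exfalso
          simp only [feval, hJdef] at h
          rw [if_pos hp] at h
          norm_num at h
        · simp only [feval]
          linarith [not_le.mp hp]
  | and A B hA hB =>
      have tA := feval_twoValued (round_twoValued I) A
      have tB := feval_twoValued (round_twoValued I) B
      simp only [feval, le_min_iff, min_le_iff]
      constructor
      · intro h
        rcases tA with h1 | h1 <;> rcases tB with h2 | h2 <;>
          rw [h1, h2] at h <;> norm_num at h
        exact ⟨hA.1 h1, hB.1 h2⟩
      · intro h
        rcases tA with h1 | h1 <;> rcases tB with h2 | h2 <;>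
          rw [h1, h2] at h <;> norm_num at h
        · exact Or.inl (hA.2 h1)
        · exact Or.inl (hA.2 h1)
        · exact Or.inr (hB.2 h2)
  | or A B hA hB =>
      have tA := feval_twoValued (round_twoValued I) A
      have tB := feval_twoValued (round_twoValued I) B
      simp only [feval, le_max_iff, max_le_iff]
      constructor
      · intro h
        rcases tA with h1 | h1 <;> rcases tB with h2 | h2 <;>
          rw [h1, h2] at h <;> norm_num at h
        · exact Or.inr (hB.1 h2)
        · exact Or.inl (hA.1 h1)
        · exact Or.inl (hA.1 h1)
      · intro h
        rcases tA with h1 | h1 <;> rcases tB with h2 | h2 <;>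
          rw [h1, h2] at h <;> norm_num at h
        exact ⟨hA.2 h1, hB.2 h2⟩
  | neg A hA =>
      simp only [feval]
      constructor
      · intro h
        have h0 : feval J A = 0 := by linarith
        linarith [hA.2 h0]
      · intro h
        have h1 : feval J A = 1 := by linarith
        linarith [hA.1 h1]

/-- A is a two-valued tautology iff every fuzzy interpretation
gives A truth value at least 0.5. -/
theorem tautology_iff_fuzzy_ge_half {α : Type} (A : PForm α) :
    (∀ I : α → ℝ, IsTwoValued I → feval I A = 1) ↔
    (∀ I : α → ℝ, IsFuzzy I → 1/2 ≤ feval I A) := by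
  constructor
  · intro h I hI
    exact (round_lemma I A).1 (h _ (round_twoValued I))
  · intro h I hI
    have hF : IsFuzzy I := fun p => by rcases hI p with h0 | h0 <;> rw [h0] <;> norm_num
    have := h I hF
    rcases feval_twoValued hI A with h0 | h0
    · rw [h0] at this; linarith
    · exact h0
end

section
/- If A four-valued entails B, then for every n > 0, ⟨A ≥ n⟩ fuzzy-entails ⟨B ≥ n⟩: every fuzzy interpretation I with I(A) ≥ n satisfies I(B) ≥ n. -/
/-- A four-valued interpretation assigns each letter a pair of Booleans
(t-membership, f-membership), i.e. a subset of {t, f}.  `eval4` extends it to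
formulas by the Belnap clauses: t∈I(A∧B) iff t∈I(A) and t∈I(B); f∈I(A∧B) iff
f∈I(A) or f∈I(B); dually for ∨; t∈I(¬A) iff f∈I(A); f∈I(¬A) iff t∈I(A). -/
def eval4 {α : Type} (I : α → Bool × Bool) : PForm α → Bool × Bool
  | .letter p => I p
  | .and A B => ((eval4 I A).1 && (eval4 I B).1, (eval4 I A).2 || (eval4 I B).2)
  | .or A B => ((eval4 I A).1 || (eval4 I B).1, (eval4 I A).2 && (eval4 I B).2)
  | .neg A => ((eval4 I A).2, (eval4 I A).1)

/-- Four-valued entailment: every four-valued interpretation making A true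
(t ∈ I(A)) makes B true. -/
def Entail4 {α : Type} (A B : PForm α) : Prop :=
  ∀ I : α → Bool × Bool, (eval4 I A).1 = true → (eval4 I B).1 = true

/-- if A ⊨₄ B then for every n > 0, ⟨A ≥ n⟩ fuzzy-entails ⟨B ≥ n⟩. -/
theorem entail4_to_fuzzy_entail {α : Type} (A B : PForm α) (h : Entail4 A B) :
    ∀ n : ℝ, 0 < n → ∀ I : α → ℝ, IsFuzzy I → n ≤ feval I A → n ≤ feval I B := by
  intro n _ I _ hA
  set I4 : α → Bool × Bool := fun p => (decide (n ≤ I p), decide (I p ≤ 1 - n)) with hI4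
  have key : ∀ C : PForm α,
      ((eval4 I4 C).1 = true ↔ n ≤ feval I C) ∧
      ((eval4 I4 C).2 = true ↔ feval I C ≤ 1 - n) := by
    intro C
    induction C with
    | letter p => simp [eval4, feval, hI4]
    | and X Y ihX ihY =>
      simp [eval4, feval, le_min_iff, min_le_iff, ihX.1, ihX.2, ihY.1, ihY.2]
    | or X Y ihX ihY =>
      simp [eval4, feval, le_max_iff, max_le_iff, ihX.1, ihX.2, ihY.1, ihY.2]
    | neg X ihX =>
      constructor
      · rw [show (eval4 I4 (.neg X)).1 = (eval4 I4 X).2 from rfl, ihX.2]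
        simp [feval]; constructor <;> intro <;> linarith
      · rw [show (eval4 I4 (.neg X)).2 = (eval4 I4 X).1 from rfl, ihX.1]
        simp [feval]; constructor <;> intro <;> linarith
  exact (key B).1.mp (h I4 ((key A).1.mpr hA))
end

section
/- Define A ⊨ₐ B iff max(1−I(A), I(B)) ≥ 0.5 for all fuzzy interpretations I. Then A ⊨ₐ B if and only if A classically (two-valued) entails B. -/
theorem twoval_feval {α : Type} (I : α → ℝ) (hI : IsTwoValued I) :
    ∀ X : PForm α, feval I X = 0 ∨ feval I X = 1 := by
  intro X
  induction X with
  | letter p => exact hI p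
  | and A B ihA ihB =>
    rcases ihA with h | h <;> rcases ihB with h' | h' <;>
      simp [feval, h, h'] <;> norm_num
  | or A B ihA ihB =>
    rcases ihA with h | h <;> rcases ihB with h' | h' <;>
      simp [feval, h, h'] <;> norm_num
  | neg A ihA =>
    rcases ihA with h | h <;> simp [feval, h]

theorem round_feval {α : Type} (I : α → ℝ) :
    ∀ X : PForm α,
      (1/2 < feval I X → feval (fun p => if 1/2 < I p then 1 else 0) X = 1) ∧
      (feval I X < 1/2 → feval (fun p => if 1/2 < I p then 1 else 0) X = 0) := by
  have htv : IsTwoValued (fun p : α => if 1/2 < I p then (1:ℝ) else 0) := by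
    intro p
    dsimp only
    split_ifs
    · exact Or.inr rfl
    · exact Or.inl rfl
  intro X
  induction X with
  | letter p =>
    constructor <;> intro h <;> simp only [feval] at h
    · show (if 1/2 < I p then (1:ℝ) else 0) = 1
      rw [if_pos h]
    · show (if 1/2 < I p then (1:ℝ) else 0) = 0
      rw [if_neg (by intro hc; exact absurd h (not_lt.mpr hc.le))]
  | and A B ihA ihB =>
    have hA01 := twoval_feval _ htv A
    have hB01 := twoval_feval _ htv B
    constructor <;> intro h <;> simp only [feval] at h ⊢
    · rw [lt_min_iff] at h
      rw [ihA.1 h.1, ihB.1 h.2, min_self]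
    · rw [min_lt_iff] at h
      rcases h with h | h
      · rw [ihA.2 h]
        rcases hB01 with h0 | h0 <;> rw [h0] <;> norm_num
      · rw [ihB.2 h]
        rcases hA01 with h0 | h0 <;> rw [h0] <;> norm_num
  | or A B ihA ihB =>
    have hA01 := twoval_feval _ htv A
    have hB01 := twoval_feval _ htv B
    constructor <;> intro h <;> simp only [feval] at h ⊢
    · rw [lt_max_iff] at h
      rcases h with h | h
      · rw [ihA.1 h]
        rcases hB01 with h0 | h0 <;> rw [h0] <;> norm_num
      · rw [ihB.1 h]
        rcases hA01 with h0 | h0 <;> rw [h0] <;> norm_num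
    · rw [max_lt_iff] at h
      rw [ihA.2 h.1, ihB.2 h.2, max_self]
  | neg A ihA =>
    constructor <;> intro h <;> simp only [feval] at h ⊢
    · rw [ihA.2 (by linarith)]; norm_num
    · rw [ihA.1 (by linarith)]; norm_num

/-- A ⊨ₐ B (max(1−I(A), I(B)) ≥ 0.5 for all fuzzy I) iff A
classically (two-valued) entails B. -/
theorem entaila_iff_entail2 {α : Type} (A B : PForm α) :
    (∀ I : α → ℝ, IsFuzzy I → 1/2 ≤ max (1 - feval I A) (feval I B)) ↔
    (∀ I : α → ℝ, IsTwoValued I → feval I A = 1 → feval I B = 1) := by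
  constructor
  · intro h I hI hA
    have hf : IsFuzzy I := fun p => by rcases hI p with h0 | h0 <;> simp [h0]
    have := h I hf
    rw [hA] at this
    simp at this
    rcases twoval_feval I hI B with h0 | h1
    · rw [h0] at this; norm_num at this
    · exact h1
  · intro h I hI
    by_contra hc
    push_neg at hc
    rw [max_lt_iff] at hc
    obtain ⟨hA, hB⟩ := hc
    have hA' : 1/2 < feval I A := by linarith
    set I' : α → ℝ := fun p => if 1/2 < I p then 1 else 0 with hI'
    have htv : IsTwoValued I' := by
      intro p
      rw [hI']
      dsimp only
      split_ifs
      · exact Or.inr rfl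
      · exact Or.inl rfl
    have key := round_feval I
    have h1 : feval I' A = 1 := (key A).1 hA'
    have h0 : feval I' B = 0 := (key B).2 hB
    have := h I' htv h1
    rw [this] at h0
    norm_num at h0
end
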